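/- Equality case of the Newton–Maclaurin inequality: let n ≥ 2 and 1 ≤ l < k ≤ n, and let λ ∈ ℝⁿ lie in the Gårding cone Γ_k⁺ (i.e. H_i(λ) > 0 for i = 1,…,k). Then H_{l−1}(λ)·H_k(λ) = H_l(λ)·H_{k−1}(λ) if and only if there exists a constant c > 0 with λ_i = c for all i = 1,…,n. -/

import Mathlib

/-!
By Rolle's theorem the derivative of `∏ i, (X + λ_i)` again splits over `ℝ`, and comparing
coefficients shows that its roots `-ν_j` have `H_j(ν) = H_j(λ)` for all `j < n`. Iterating, Newton's
inequality `H_m H_{m+2} ≤ H_{m+1}²` and its equality case reduce to `n = m + 2`. There the substitution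
`λ ↦ λ⁻¹` turns `(H_m, H_{m+1}, H_{m+2})` into `∏ λ_i · (H_2, H_1, H_0)` of `λ⁻¹`, and the identity
`n (n - 1) (H_1² - H_2) = ∑ (λ_i - H_1)²` settles both, provided `H_n ≠ 0` so that `λ` can be inverted.

In the cone `Γ_k⁺` Newton's inequalities say that the ratios `H_{i+1} / H_i` are nonincreasing for
`i < k`. Equality of the ratios at `l - 1` and `k - 1` therefore forces equality at `l - 1` and `l`,
which is the equality case of Newton's inequality for `m = l - 1`.
-/

/-- The `k`-th elementary symmetric polynomial `S_k(λ)` of `λ ∈ ℝⁿ`. -/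
noncomputable def S (n k : ℕ) (lam : Fin n → ℝ) : ℝ :=
  ∑ A ∈ (Finset.univ : Finset (Fin n)).powersetCard k, ∏ i ∈ A, lam i

/-- The normalized `k`-th elementary symmetric function `H_k(λ) = S_k(λ) / C(n,k)`. -/
noncomputable def H (n k : ℕ) (lam : Fin n → ℝ) : ℝ := S n k lam / (n.choose k)

open Finset Polynomial

lemma H_zero (n : ℕ) (lam : Fin n → ℝ) : H n 0 lam = 1 := by
  simp [H, S]

lemma H_self (n : ℕ) (lam : Fin n → ℝ) : H n n lam = ∏ i, lam i := by
  have h : (univ : Finset (Fin n)).powersetCard n = {univ} := by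
    simpa using powersetCard_self (univ : Finset (Fin n))
  simp [H, S, h]

lemma H_const {n k : ℕ} (hk : k ≤ n) (c : ℝ) : H n k (fun _ => c) = c ^ k := by
  have hchoose : (n.choose k : ℝ) ≠ 0 := by exact_mod_cast (Nat.choose_pos hk).ne'
  rw [H, S, sum_congr rfl fun A hA => by rw [prod_const, (mem_powersetCard.1 hA).2],
    sum_const, card_powersetCard, card_univ, Fintype.card_fin, nsmul_eq_mul,
    mul_div_cancel_left₀ _ hchoose]

lemma two_mul_S_two (n : ℕ) (lam : Fin n → ℝ) :
    2 * S n 2 lam = (∑ i, lam i) ^ 2 - ∑ i, lam i ^ 2 := by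
  -- Newton's identity `2 e₂ = e₁ p₁ - p₂`
  have h := congrArg (MvPolynomial.aeval lam) (MvPolynomial.mul_esymm_eq_sum (Fin n) ℝ 2)
  rw [show (antidiagonal 2).filter (fun a : ℕ × ℕ => a.1 < 2) = {(0, 2), (1, 1)} by decide,
    sum_pair (by decide)] at h
  simp only [MvPolynomial.esymm, MvPolynomial.psum, map_mul, map_add, map_sum, map_prod, map_pow,
    MvPolynomial.aeval_X, map_ofNat, map_neg, map_one, powersetCard_zero, powersetCard_one,
    sum_singleton, sum_map, prod_empty, prod_singleton, Function.Embedding.coeFn_mk, Nat.cast_ofNat,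
    pow_one] at h
  rw [S]
  linear_combination h

lemma mul_H_one_sq_sub_H_two {n : ℕ} (hn : 2 ≤ n) (lam : Fin n → ℝ) :
    n * (n - 1) * (H n 1 lam ^ 2 - H n 2 lam) = ∑ i, (lam i - H n 1 lam) ^ 2 := by
  have hS2 := two_mul_S_two n lam
  have hn' : (n : ℝ) - 1 ≠ 0 := by
    have : (2 : ℝ) ≤ n := by exact_mod_cast hn
    linarith
  simp only [sub_sq, sum_add_distrib, sum_sub_distrib, ← sum_mul, ← mul_sum, sum_const, card_univ,
    Fintype.card_fin, nsmul_eq_mul]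
  rw [H, H, Nat.choose_one_right, Nat.cast_choose_two, S, powersetCard_one]
  simp only [sum_map, Function.Embedding.coeFn_mk, prod_singleton]
  field_simp
  linear_combination -(n : ℝ) * hS2

lemma H_two_le_H_one_sq {n : ℕ} (hn : 2 ≤ n) (lam : Fin n → ℝ) : H n 2 lam ≤ H n 1 lam ^ 2 := by
  have hpos : (0 : ℝ) < n * (n - 1) := by
    have : (2 : ℝ) ≤ n := by exact_mod_cast hn
    nlinarith
  have h := mul_H_one_sq_sub_H_two hn lam
  have hsum : 0 ≤ ∑ i, (lam i - H n 1 lam) ^ 2 := by positivity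
  exact sub_nonneg.1 (nonneg_of_mul_nonneg_right (h ▸ hsum) hpos)

lemma eq_H_one_of_H_two_eq {n : ℕ} (hn : 2 ≤ n) (lam : Fin n → ℝ)
    (h : H n 2 lam = H n 1 lam ^ 2) (i : Fin n) : lam i = H n 1 lam := by
  have hsum := mul_H_one_sq_sub_H_two hn lam
  rw [h, sub_self, mul_zero, eq_comm,
    sum_eq_zero_iff_of_nonneg fun _ _ => sq_nonneg _] at hsum
  exact sub_eq_zero.1 (pow_eq_zero_iff two_ne_zero |>.1 (hsum i (mem_univ i)))

theorem Polynomial.Splits.derivative {p : ℝ[X]} (hp : p.Splits) : p.derivative.Splits := by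
  rw [splits_iff_card_roots] at hp ⊢
  have := card_roots_le_derivative p
  have := card_roots' p.derivative
  rw [natDegree_derivative] at *
  omega

theorem Multiset.exists_fin_map_eq {α : Type*} {m : ℕ} (s : Multiset α) (h : Multiset.card s = m) :
    ∃ g : Fin m → α, univ.val.map g = s := by
  subst h
  refine ⟨fun i => s.toList.get (Fin.cast (by simp) i), ?_⟩
  rw [Fin.univ_val_map, ← List.ofFn_congr (Multiset.length_toList s) s.toList.get, List.ofFn_get,
    Multiset.coe_toList]

lemma coeff_prod_X_add_C {n j k : ℕ} (h : j + k = n) (lam : Fin n → ℝ) :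
    (∏ i, (X + C (lam i))).coeff k = S n j lam := by
  rw [Finset.prod_X_add_C_coeff _ _ (by rw [card_univ, Fintype.card_fin]; omega), S, card_univ, Fintype.card_fin,
    show n - k = j by omega]

lemma exists_derivative_prod_X_add_C_eq (m : ℕ) (lam : Fin (m + 1) → ℝ) :
    ∃ nu : Fin m → ℝ, derivative (∏ i, (X + C (lam i))) = C ((m : ℝ) + 1) * ∏ i, (X + C (nu i)) := by
  set p : ℝ[X] := ∏ i, (X + C (lam i))
  have hmonic : p.Monic := monic_prod_of_monic _ _ fun i _ => monic_X_add_C (lam i)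
  have hdeg : p.natDegree = m + 1 := by
    simp [p, natDegree_prod_of_monic _ _ fun i _ => monic_X_add_C (lam i)]
  have hsplits : p.derivative.Splits :=
    (Splits.prod fun i _ => Splits.of_natDegree_le_one (natDegree_X_add_C (lam i)).le).derivative
  have hcard : Multiset.card p.derivative.roots = m := by
    rw [splits_iff_card_roots.1 hsplits, natDegree_derivative, hdeg]; rfl
  obtain ⟨g, hg⟩ := Multiset.exists_fin_map_eq _ hcard
  refine ⟨-g, ?_⟩
  rw [hsplits.eq_prod_roots, leadingCoeff_derivative, hmonic.leadingCoeff, hdeg, ← hg]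
  simp [Finset.prod_eq_multiset_prod, sub_eq_add_neg, Function.comp_def]

lemma exists_H_eq_H_succ (m : ℕ) (lam : Fin (m + 1) → ℝ) :
    ∃ nu : Fin m → ℝ, ∀ j ≤ m, H m j nu = H (m + 1) j lam := by
  obtain ⟨nu, hnu⟩ := exists_derivative_prod_X_add_C_eq m lam
  refine ⟨nu, fun j hj => ?_⟩
  -- the coefficient of `X ^ (m - j)` gives `S_j(λ) (m - j + 1) = (m + 1) S_j(ν)`
  have hcoeff := congrArg (coeff · (m - j)) hnu
  simp only [coeff_derivative, coeff_C_mul] at hcoeff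
  rw [coeff_prod_X_add_C (by omega : j + (m - j + 1) = m + 1),
    coeff_prod_X_add_C (by omega : j + (m - j) = m)] at hcoeff
  have hchoose : ((m.choose j : ℕ) : ℝ) * (m + 1) = ((m + 1).choose j : ℕ) * ((m - j : ℕ) + 1) := by
    exact_mod_cast (Nat.choose_mul_succ_eq m j).trans (by congr 1; omega)
  have h1 : (0 : ℝ) < m.choose j := by exact_mod_cast Nat.choose_pos hj
  have h2 : (0 : ℝ) < (m + 1).choose j := by exact_mod_cast Nat.choose_pos (by omega)
  rw [H, H, div_eq_div_iff h1.ne' h2.ne']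
  apply mul_right_cancel₀ (by positivity : (m : ℝ) + 1 ≠ 0)
  linear_combination (↑((m + 1).choose j) : ℝ) * hcoeff.symm - S (m + 1) j lam * hchoose

lemma exists_H_eq_of_le {d n : ℕ} (h : d ≤ n) (lam : Fin n → ℝ) :
    ∃ mu : Fin d → ℝ, ∀ j ≤ d, H d j mu = H n j lam := by
  induction n, h using Nat.le_induction with
  | base => exact ⟨lam, fun _ _ => rfl⟩
  | succ n hdn ih =>
    obtain ⟨nu, hnu⟩ := exists_H_eq_H_succ n lam
    obtain ⟨mu, hmu⟩ := ih nu
    exact ⟨mu, fun j hj => (hmu j hj).trans (hnu j (hj.trans hdn))⟩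

lemma S_inv_mul_prod {n j k : ℕ} (h : j + k = n) (lam : Fin n → ℝ) (hlam : ∀ i, lam i ≠ 0) :
    S n j lam⁻¹ * ∏ i, lam i = S n k lam := by
  rw [S, S, sum_mul]
  refine sum_nbij' (fun A => Aᶜ) (fun B => Bᶜ) ?_ ?_ (fun A _ => compl_compl A)
    (fun B _ => compl_compl B) fun A _ => ?_
  · intro A hA
    simp only [mem_powersetCard, subset_univ, true_and, card_compl,
      Fintype.card_fin] at hA ⊢
    omega
  · intro B hB
    simp only [mem_powersetCard, subset_univ, true_and, card_compl,
      Fintype.card_fin] at hB ⊢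
    omega
  · simp only [Pi.inv_apply]
    rw [← prod_mul_prod_compl A lam, ← mul_assoc, ← prod_mul_distrib,
      prod_eq_one fun i _ => inv_mul_cancel₀ (hlam i), one_mul]

lemma H_inv_mul_prod {n j k : ℕ} (h : j + k = n) (lam : Fin n → ℝ) (hlam : ∀ i, lam i ≠ 0) :
    H n j lam⁻¹ * ∏ i, lam i = H n k lam := by
  subst h
  rw [H, H, Nat.choose_symm_add, div_mul_eq_mul_div, S_inv_mul_prod rfl lam hlam]

lemma sq_H_sub_H_mul_H_self (m : ℕ) (mu : Fin (m + 2) → ℝ) (hmu : ∀ i, mu i ≠ 0) :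
    H (m + 2) (m + 1) mu ^ 2 - H (m + 2) m mu * H (m + 2) (m + 2) mu
      = (∏ i, mu i) ^ 2 * (H (m + 2) 1 mu⁻¹ ^ 2 - H (m + 2) 2 mu⁻¹) := by
  rw [← H_inv_mul_prod (j := 1) (by omega) mu hmu, ← H_inv_mul_prod (j := 2) (by omega) mu hmu,
    H_self]
  ring

lemma H_mul_H_self_le_sq (m : ℕ) (mu : Fin (m + 2) → ℝ) :
    H (m + 2) m mu * H (m + 2) (m + 2) mu ≤ H (m + 2) (m + 1) mu ^ 2 := by
  by_cases hmu : ∀ i, mu i ≠ 0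
  · refine sub_nonneg.1 ?_
    rw [sq_H_sub_H_mul_H_self m mu hmu]
    exact mul_nonneg (sq_nonneg _) (sub_nonneg.2 (H_two_le_H_one_sq (by omega) _))
  · obtain ⟨i, hi⟩ := not_forall_not.1 hmu
    rw [H_self, prod_eq_zero (mem_univ i) hi, mul_zero]
    exact sq_nonneg _

lemma exists_eq_const_of_H_mul_H_self_eq_sq (m : ℕ) (mu : Fin (m + 2) → ℝ)
    (hne : H (m + 2) (m + 2) mu ≠ 0)
    (h : H (m + 2) m mu * H (m + 2) (m + 2) mu = H (m + 2) (m + 1) mu ^ 2) :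
    ∃ c, ∀ i, mu i = c := by
  rw [H_self] at hne
  have hmu : ∀ i, mu i ≠ 0 := fun i hi => hne (prod_eq_zero (mem_univ i) hi)
  have key := sq_H_sub_H_mul_H_self m mu hmu
  rw [← h, sub_self, eq_comm, mul_eq_zero, sub_eq_zero] at key
  have hinv := eq_H_one_of_H_two_eq (by omega) mu⁻¹ (key.resolve_left (pow_ne_zero 2 hne)).symm
  exact ⟨(H (m + 2) 1 mu⁻¹)⁻¹, fun i => by rw [← hinv i, Pi.inv_apply, inv_inv]⟩

theorem H_mul_H_add_two_le_sq {n m : ℕ} (hm : m + 2 ≤ n) (lam : Fin n → ℝ) :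
    H n m lam * H n (m + 2) lam ≤ H n (m + 1) lam ^ 2 := by
  obtain ⟨mu, hmu⟩ := exists_H_eq_of_le hm lam
  rw [← hmu m (by omega), ← hmu (m + 1) (by omega), ← hmu (m + 2) le_rfl]
  exact H_mul_H_self_le_sq m mu

theorem exists_eq_const_of_H_mul_H_add_two_eq_sq {n m : ℕ} (hm : m + 2 ≤ n) (lam : Fin n → ℝ)
    (hne : H n (m + 2) lam ≠ 0) (h : H n m lam * H n (m + 2) lam = H n (m + 1) lam ^ 2) :
    ∃ c, ∀ i, lam i = c := by
  obtain ⟨mu, hmu⟩ := exists_H_eq_of_le hm lam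
  rw [← hmu m (by omega), ← hmu (m + 1) (by omega), ← hmu (m + 2) le_rfl] at h
  rw [← hmu (m + 2) le_rfl] at hne
  obtain ⟨c, hc⟩ := exists_eq_const_of_H_mul_H_self_eq_sq m mu hne h
  obtain rfl : mu = fun _ => c := funext hc
  have h1 : H n 1 lam = c := by rw [← hmu 1 (by omega), H_const (by omega), pow_one]
  have h2 : H n 2 lam = c ^ 2 := by rw [← hmu 2 (by omega), H_const (by omega)]
  exact ⟨c, fun i => h1 ▸ eq_H_one_of_H_two_eq (by omega) lam (by rw [h1, h2]) i⟩

lemma mul_eq_sq_of_mul_eq_mul_of_log_concave {a : ℕ → ℝ} {l k : ℕ} (hlk : l < k)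
    (hpos : ∀ i ≤ k, 0 < a i) (hconc : ∀ m < k, a m * a (m + 2) ≤ a (m + 1) ^ 2)
    (heq : a l * a (k + 1) = a (l + 1) * a k) : a l * a (l + 2) = a (l + 1) ^ 2 := by
  set r : ℕ → ℝ := fun m => a (m + 1) / a m
  have hanti : AntitoneOn r (Set.Iic k) := by
    refine antitoneOn_of_succ_le Set.ordConnected_Iic fun m _ _ hm => ?_
    simp only [Order.succ_eq_add_one, Set.mem_Iic, r] at hm ⊢
    rw [div_le_div_iff₀ (hpos _ hm) (hpos _ (by omega))]
    linarith [hconc m hm]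
  have hstep : r (l + 1) ≤ r l := hanti (Set.mem_Iic.2 hlk.le) (Set.mem_Iic.2 hlk) (by omega)
  have htail : r k ≤ r (l + 1) := hanti (Set.mem_Iic.2 hlk) (Set.mem_Iic.2 le_rfl) hlk
  have hends : r k = r l := by
    rw [div_eq_div_iff (hpos k le_rfl).ne' (hpos l hlk.le).ne']
    linear_combination heq
  have hr : r (l + 1) = r l := le_antisymm hstep (hends ▸ htail)
  rw [div_eq_div_iff (hpos _ (by omega)).ne' (hpos l hlk.le).ne'] at hr
  linear_combination hr

theorem newton_maclaurin_equality_general (n l k : ℕ) (hl : 1 ≤ l) (hlk : l < k)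
    (hkn : k ≤ n) (lam : Fin n → ℝ)
    (hGarding : ∀ i, 1 ≤ i → i ≤ k → 0 < H n i lam) :
    H n (l - 1) lam * H n k lam = H n l lam * H n (k - 1) lam ↔
      ∃ c : ℝ, 0 < c ∧ ∀ i, lam i = c := by
  obtain ⟨l, rfl⟩ : ∃ l', l = l' + 1 := ⟨l - 1, by omega⟩
  obtain ⟨k, rfl⟩ : ∃ k', k = k' + 1 := ⟨k - 1, by omega⟩
  simp only [Nat.add_sub_cancel]
  constructor
  · intro heq
    have hpos : ∀ i ≤ k, 0 < H n i lam := by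
      rintro (_ | i) hi
      · rw [H_zero]; exact one_pos
      · exact hGarding (i + 1) (by omega) (by omega)
    have hnewton := mul_eq_sq_of_mul_eq_mul_of_log_concave (by omega) hpos
      (fun m hm => H_mul_H_add_two_le_sq (by omega) lam) heq
    obtain ⟨c, hc⟩ := exists_eq_const_of_H_mul_H_add_two_eq_sq (by omega) lam
      (hGarding (l + 2) (by omega) (by omega)).ne' hnewton
    refine ⟨c, ?_, hc⟩
    simpa [funext hc, H_const (by omega : 1 ≤ n)] using hGarding 1 le_rfl (by omega)
  · rintro ⟨c, -, hc⟩
    obtain rfl : lam = fun _ => c := funext hc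
    rw [H_const (by omega), H_const (by omega), H_const (by omega), H_const (by omega)]
    ring

/-- Equality case of the Newton–Maclaurin inequality: if `n ≥ 2`, `1 ≤ l < k ≤ n` and `λ`
lies in the Gårding cone `Γ_k⁺` (i.e. `H_i(λ) > 0` for `i = 1, …, k`), then
`H_{l-1}(λ) · H_k(λ) = H_l(λ) · H_{k-1}(λ)` if and only if there is a constant `c > 0`
with `λ_i = c` for all `i`. -/
theorem newton_maclaurin_equality (n l k : ℕ) (hn : 2 ≤ n) (hl : 1 ≤ l) (hlk : l < k)
    (hkn : k ≤ n) (lam : Fin n → ℝ)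
    (hGarding : ∀ i, 1 ≤ i → i ≤ k → 0 < H n i lam) :
    H n (l - 1) lam * H n k lam = H n l lam * H n (k - 1) lam ↔
      ∃ c : ℝ, 0 < c ∧ ∀ i, lam i = c :=
  newton_maclaurin_equality_general n l k hl hlk hkn lam hGarding
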